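/- Cauchy–Schwarz type inequality for the trace norm: For any complex square matrix X of size d and any positive definite density operator ρ of size d (positive definite with Tr[ρ] = 1), it holds that ‖X‖₁ ≤ √( Tr[X† X ρ^{−1}] ). -/

import Mathlib

open scoped Kronecker ComplexOrder
open MeasureTheory Matrix

noncomputable section

namespace QD

/-! ### Haar measure on the unitary group -/

variable {n : Type*} [Fintype n] [DecidableEq n]

theorem isClosed_unitaryGroup :
    IsClosed ((Matrix.unitaryGroup n ℂ : Set (Matrix n n ℂ))) := by
  have h1 : Continuous fun A : Matrix n n ℂ => star A * A :=
    Continuous.matrix_mul continuous_star continuous_id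
  have h2 : Continuous fun A : Matrix n n ℂ => A * star A :=
    Continuous.matrix_mul continuous_id continuous_star
  have heq : (Matrix.unitaryGroup n ℂ : Set (Matrix n n ℂ)) =
      {A | star A * A = 1} ∩ {A | A * star A = 1} := by
    ext A; exact Iff.rfl
  rw [heq]
  exact (isClosed_eq h1 continuous_const).inter (isClosed_eq h2 continuous_const)

theorem isCompact_unitaryGroup :
    IsCompact ((Matrix.unitaryGroup n ℂ : Set (Matrix n n ℂ))) := by
  have hK : IsCompact {A : Matrix n n ℂ | ∀ i j, A i j ∈ Metric.closedBall (0 : ℂ) 1} := by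
    have heq : {A : Matrix n n ℂ | ∀ i j, A i j ∈ Metric.closedBall (0 : ℂ) 1} =
        Set.pi Set.univ fun _ : n => Set.pi Set.univ fun _ : n => Metric.closedBall (0 : ℂ) 1 := by
      refine Set.eq_of_subset_of_subset ?_ ?_
      · intro A hA i _ j _
        exact hA i j
      · intro A hA i j
        exact hA i trivial j trivial
    rw [heq]
    exact isCompact_univ_pi fun _ => isCompact_univ_pi fun _ => isCompact_closedBall _ _
  refine IsCompact.of_isClosed_subset hK isClosed_unitaryGroup ?_
  intro A hA i j
  simpa [Metric.mem_closedBall, dist_eq_norm] using entry_norm_bound_of_unitary hA i j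

instance : CompactSpace (Matrix.unitaryGroup n ℂ) :=
  isCompact_iff_compactSpace.mp isCompact_unitaryGroup

instance : IsTopologicalGroup (Matrix.unitaryGroup n ℂ) where
  continuous_mul := by
    apply Continuous.subtype_mk
    exact ((continuous_subtype_val.comp continuous_fst).matrix_mul
      (continuous_subtype_val.comp continuous_snd))
  continuous_inv :=
    Continuous.subtype_mk (continuous_star.comp continuous_subtype_val) _

instance : MeasurableSpace (Matrix.unitaryGroup n ℂ) := borel _

instance : BorelSpace (Matrix.unitaryGroup n ℂ) := ⟨rfl⟩

/-- The normalized Haar (probability) measure on the unitary group of `ℂ^n`. -/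
def haarU (n : Type*) [Fintype n] [DecidableEq n] : Measure (Matrix.unitaryGroup n ℂ) :=
  Measure.haarMeasure (⊤ : TopologicalSpace.PositiveCompacts (Matrix.unitaryGroup n ℂ))

/-- Entrywise (Bochner) integral of a matrix-valued function. -/
def matIntegral {G : Type*} [MeasurableSpace G] (μ : Measure G) {m l : Type*}
    (f : G → Matrix m l ℂ) : Matrix m l ℂ :=
  Matrix.of fun i j => ∫ g, f g i j ∂μ

/-! ### Basic matrix-analytic quantities -/

/-- Trace norm `‖X‖₁ = Tr √(XᴴX)`. -/
def traceNorm (X : Matrix n n ℂ) : ℝ :=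
  (((Matrix.posSemidef_conjTranspose_mul_self X).1.eigenvectorUnitary : Matrix n n ℂ) *
      Matrix.diagonal (((↑) : ℝ → ℂ) ∘ Real.sqrt ∘ (Matrix.posSemidef_conjTranspose_mul_self X).1.eigenvalues) *
      (star (Matrix.posSemidef_conjTranspose_mul_self X).1.eigenvectorUnitary : Matrix n n ℂ)).trace.re

/-- Hilbert–Schmidt (Schatten-2) norm `‖X‖₂ = √(Tr[XᴴX])`. -/
def hsNorm (X : Matrix n n ℂ) : ℝ :=
  Real.sqrt ((Xᴴ * X).trace.re)

/-- A density operator: positive semidefinite with unit trace. -/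
def IsDensity (ρ : Matrix n n ℂ) : Prop := ρ.PosSemidef ∧ ρ.trace = 1

/-- Eigenvalues of a matrix (junk value `0` off the Hermitian matrices). -/
def eigvals (H : Matrix n n ℂ) : n → ℝ :=
  if h : H.IsHermitian then h.eigenvalues else 0

/-- Number of distinct eigenvalues `|spec(H)|`. -/
def specCount (H : Matrix n n ℂ) : ℕ := (Finset.univ.image (eigvals H)).card

/-- Spectral projection of a Hermitian matrix onto the eigenspace of `μ`
(junk value `0` off the Hermitian matrices). -/
def eigProj (H : Matrix n n ℂ) (μ : ℝ) : Matrix n n ℂ :=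
  if h : H.IsHermitian then
    (h.eigenvectorUnitary : Matrix n n ℂ) *
      Matrix.diagonal (fun i => if h.eigenvalues i = μ then (1 : ℂ) else 0) *
      (h.eigenvectorUnitary : Matrix n n ℂ)ᴴ
  else 0

/-- The pinching map `P_H[L] = ∑_i e_i L e_i`, the sum running over the spectral
projections `e_i` onto the distinct eigenvalues of `H`. -/
def pinch (H L : Matrix n n ℂ) : Matrix n n ℂ :=
  ∑ μ ∈ Finset.univ.image (eigvals H), eigProj H μ * L * eigProj H μ

/-- The projection `{X ≤ Y}` onto the span of eigenvectors of `Y - X` with nonnegative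
eigenvalues. -/
def projLE (X Y : Matrix n n ℂ) : Matrix n n ℂ :=
  if h : (Y - X).IsHermitian then
    (h.eigenvectorUnitary : Matrix n n ℂ) *
      Matrix.diagonal (fun i => if 0 ≤ h.eigenvalues i then (1 : ℂ) else 0) *
      (h.eigenvectorUnitary : Matrix n n ℂ)ᴴ
  else 0

/-- The projection onto the span of eigenvectors of `H` with positive eigenvalues. -/
def projPos (H : Matrix n n ℂ) : Matrix n n ℂ :=
  if h : H.IsHermitian then
    (h.eigenvectorUnitary : Matrix n n ℂ) *
      Matrix.diagonal (fun i => if 0 < h.eigenvalues i then (1 : ℂ) else 0) *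
      (h.eigenvectorUnitary : Matrix n n ℂ)ᴴ
  else 0

/-- Real power of a Hermitian matrix through the spectral decomposition
(junk value `0` off the Hermitian matrices). -/
def rpow (H : Matrix n n ℂ) (r : ℝ) : Matrix n n ℂ :=
  if h : H.IsHermitian then
    (h.eigenvectorUnitary : Matrix n n ℂ) *
      Matrix.diagonal (fun i => ((h.eigenvalues i ^ r : ℝ) : ℂ)) *
      (h.eigenvectorUnitary : Matrix n n ℂ)ᴴ
  else 0

/-- Matrix logarithm of a Hermitian (positive definite) matrix through the spectral
decomposition (junk value `0` off the Hermitian matrices). -/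
def matLog (H : Matrix n n ℂ) : Matrix n n ℂ :=
  if h : H.IsHermitian then
    (h.eigenvectorUnitary : Matrix n n ℂ) *
      Matrix.diagonal (fun i => ((Real.log (h.eigenvalues i) : ℝ) : ℂ)) *
      (h.eigenvectorUnitary : Matrix n n ℂ)ᴴ
  else 0

/-! ### Divergences -/

/-- `ε`-information-spectrum divergence
`D_s^ε(ρ‖σ) = sup {log c : c > 0, Tr[ρ {ρ ≤ cσ}] ≤ ε}`. -/
def Ds (ε : ℝ) (ρ σ : Matrix n n ℂ) : ℝ :=
  sSup {x : ℝ | ∃ c : ℝ, 0 < c ∧ (ρ * projLE ρ ((c : ℂ) • σ)).trace.re ≤ ε ∧ x = Real.log c}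

/-- `ε`-hypothesis-testing divergence
`D_h^ε(ρ‖σ) = sup {-log Tr[σT] : 0 ≤ T ≤ 1, Tr[ρT] ≥ 1 - ε}`. -/
def Dh (ε : ℝ) (ρ σ : Matrix n n ℂ) : ℝ :=
  sSup {x : ℝ | ∃ T : Matrix n n ℂ, T.PosSemidef ∧ (1 - T).PosSemidef ∧
    1 - ε ≤ (ρ * T).trace.re ∧ x = -Real.log ((σ * T).trace.re)}

/-- `exp D₂*(ρ‖σ) = Tr[(σ^{-1/4} ρ σ^{-1/4})²]`, the exponential of the collision
divergence. -/
def expD2 (ρ σ : Matrix n n ℂ) : ℝ :=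
  ((rpow σ (-(1/4 : ℝ)) * ρ * rpow σ (-(1/4 : ℝ))) ^ 2).trace.re

/-- Quantum relative entropy `D(ρ‖σ) = Tr[ρ(log ρ - log σ)]`. -/
def relEntropy (ρ σ : Matrix n n ℂ) : ℝ :=
  (ρ * (matLog ρ - matLog σ)).trace.re

/-- Quantum relative entropy variance `V(ρ‖σ) = Tr[ρ(log ρ - log σ)²] - D(ρ‖σ)²`. -/
def relVar (ρ σ : Matrix n n ℂ) : ℝ :=
  ((ρ * (matLog ρ - matLog σ) ^ 2).trace.re) - (relEntropy ρ σ) ^ 2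

/-! ### Bipartite notions; the first factor is the `A` system -/

variable {a b e : Type*}

/-- Partial trace over the first tensor factor. -/
def ptraceFst [Fintype a] (X : Matrix (a × b) (a × b) ℂ) : Matrix b b ℂ :=
  Matrix.of fun i j => ∑ x, X (x, i) (x, j)

/-- Partial trace over the `A₁` factor of a tripartite `(A₁ ⊗ C) ⊗ E` system. -/
def ptraceA1 [Fintype a] (X : Matrix ((a × b) × e) ((a × b) × e) ℂ) :
    Matrix (b × e) (b × e) ℂ :=
  Matrix.of fun p q => ∑ x, X ((x, p.1), p.2) ((x, q.1), q.2)

/-- Pinching of a bipartite operator with respect to a state on the second factor: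
`P_{σ} = id ⊗ (pinching w.r.t. σ)`. -/
def pinchSnd [Fintype a] [DecidableEq a] [Fintype b] [DecidableEq b]
    (σ : Matrix b b ℂ) (L : Matrix (a × b) (a × b) ℂ) : Matrix (a × b) (a × b) ℂ :=
  ∑ μ ∈ Finset.univ.image (eigvals σ),
    ((1 : Matrix a a ℂ) ⊗ₖ eigProj σ μ) * L * ((1 : Matrix a a ℂ) ⊗ₖ eigProj σ μ)

/-- Conditional `ε`-hypothesis-testing entropy `H_h^ε(A|B)_ρ = -D_h^ε(ρ_{AB} ‖ 1_A ⊗ ρ_B)`. -/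
def Hh [Fintype a] [DecidableEq a] [Fintype b] [DecidableEq b] (ε : ℝ)
    (ρ : Matrix (a × b) (a × b) ℂ) : ℝ :=
  -(Dh ε ρ ((1 : Matrix a a ℂ) ⊗ₖ ptraceFst ρ))

/-- Conditional entropy `H(A|B)_ρ = -Tr[ρ (log ρ - log (1_A ⊗ ρ_B))]`. -/
def condEntropy [Fintype a] [DecidableEq a] [Fintype b] [DecidableEq b]
    (ρ : Matrix (a × b) (a × b) ℂ) : ℝ :=
  -relEntropy ρ ((1 : Matrix a a ℂ) ⊗ₖ ptraceFst ρ)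

/-- Conditional information variance `V(A|B)_ρ`. -/
def condVar [Fintype a] [DecidableEq a] [Fintype b] [DecidableEq b]
    (ρ : Matrix (a × b) (a × b) ℂ) : ℝ :=
  relVar ρ ((1 : Matrix a a ℂ) ⊗ₖ ptraceFst ρ)

/-- The average decoupling error
`Δ = (1/2) ∫ ‖Tr_{A₁}[(U ⊗ 1_E) ρ (U ⊗ 1_E)†] - (1_C/|C|) ⊗ ρ_E‖₁ dU`,
with respect to the normalized Haar measure, for a state on `(A₁ ⊗ C) ⊗ E`. -/
def decErr {a c e : Type*} [Fintype a] [DecidableEq a] [Fintype c] [DecidableEq c]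
    [Fintype e] [DecidableEq e] (ρ : Matrix ((a × c) × e) ((a × c) × e) ℂ) : ℝ :=
  (1 / 2) * ∫ U : Matrix.unitaryGroup (a × c) ℂ,
    traceNorm
      (ptraceA1 (((U : Matrix (a × c) (a × c) ℂ) ⊗ₖ (1 : Matrix e e ℂ)) * ρ *
          ((U : Matrix (a × c) (a × c) ℂ) ⊗ₖ (1 : Matrix e e ℂ))ᴴ) -
        (((Fintype.card c : ℂ)⁻¹ • (1 : Matrix c c ℂ)) ⊗ₖ ptraceFst ρ))
    ∂(haarU (a × c))

/-! ### Asymptotics -/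

/-- `n`-fold Kronecker tensor power of a matrix. -/
def kronPow {α : Type*} [Fintype α] (ρ : Matrix α α ℂ) (N : ℕ) :
    Matrix (Fin N → α) (Fin N → α) ℂ :=
  Matrix.of fun p q => ∏ i, ρ (p i) (q i)

/-- `n`-fold Kronecker tensor power of a bipartite matrix, regarded as a bipartite
matrix on `A^n ⊗ E^n`. -/
def tensorPow {α β : Type*} [Fintype α] [Fintype β] (ρ : Matrix (α × β) (α × β) ℂ) (N : ℕ) :
    Matrix ((Fin N → α) × (Fin N → β)) ((Fin N → α) × (Fin N → β)) ℂ :=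
  Matrix.of fun p q => ∏ i, ρ (p.1 i, p.2 i) (q.1 i, q.2 i)

/-- The maximal remainder dimension `ℓ^ε(A|E)_ρ`: the largest `dC` dividing `|A|` such
that, for an identification `A ≅ A₁ ⊗ C` with `|C| = dC`, the average decoupling error
is at most `ε`. -/
def maxRemDim {α β : Type*} [Fintype α] [DecidableEq α] [Fintype β] [DecidableEq β]
    (ε : ℝ) (ρ : Matrix (α × β) (α × β) ℂ) : ℕ :=
  sSup {dC : ℕ | dC ∣ Fintype.card α ∧
    ∃ φ : α ≃ Fin (Fintype.card α / dC) × Fin dC,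
      decErr (Matrix.of fun p q => ρ (φ.symm p.1, p.2) (φ.symm q.1, q.2)) ≤ ε}

/-- The inverse of the cumulative distribution function of the standard normal
distribution. -/
def PhiInv (ε : ℝ) : ℝ :=
  sSup {u : ℝ | (∫ t in Set.Iic u, Real.exp (-(t ^ 2) / 2) / Real.sqrt (2 * Real.pi)) ≤ ε}


/-- `1_{A₁} ⊗ Y` : reinsertion of the identity on the `A₁` factor of `(A₁ ⊗ A₂) ⊗ E`. -/
def insertIdFst {a1 a2 e : Type*} [DecidableEq a1] (Y : Matrix (a2 × e) (a2 × e) ℂ) :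
    Matrix ((a1 × a2) × e) ((a1 × a2) × e) ℂ :=
  Matrix.of fun p q => (if p.1.1 = q.1.1 then (1 : ℂ) else 0) * Y (p.1.2, p.2) (q.1.2, q.2)

/-- The swap operator `F = ∑_{i,j} |i⟩⟨j| ⊗ |j⟩⟨i|` on `ℂ^α ⊗ ℂ^α`. -/
def swapOp (α : Type*) [Fintype α] [DecidableEq α] : Matrix (α × α) (α × α) ℂ :=
  ∑ i : α, ∑ j : α, (Matrix.single i j (1 : ℂ)) ⊗ₖ (Matrix.single j i (1 : ℂ))

/-- The operator on `(ℂ^{A₁} ⊗ ℂ^{A₂}) ⊗ (ℂ^{A₁} ⊗ ℂ^{A₂})` acting as the identity on the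
two `A₁` factors and as the swap on the two `A₂` factors. -/
def partialSwapOp (a1 a2 : Type*) [DecidableEq a1] [DecidableEq a2] :
    Matrix ((a1 × a2) × (a1 × a2)) ((a1 × a2) × (a1 × a2)) ℂ :=
  Matrix.of fun p q =>
    if p.1.1 = q.1.1 ∧ p.2.1 = q.2.1 ∧ p.1.2 = q.2.2 ∧ p.2.2 = q.1.2 then (1 : ℂ) else 0

end QD

/-!
With `|X| = √(XᴴX)` we have `‖X‖₁ = Tr |X| = Tr[|X| ρ⁻¹ ρ]`, which is the inner product of `ρ`
and `|X|` for the positive definite sesquilinear form `⟪x, y⟫ = Tr[y ρ⁻¹ xᴴ]`. Cauchy–Schwarz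
bounds it by `√(Tr[ρ ρ⁻¹ ρ]) · √(Tr[|X| ρ⁻¹ |X|]) = √(Tr ρ) · √(Tr[XᴴX ρ⁻¹])`.
-/

open scoped MatrixOrder

namespace Matrix

variable {𝕜 n : Type*} [RCLike 𝕜] [Fintype n]

theorem PosSemidef.re_trace_mul_mul_conjTranspose_le {M : Matrix n n 𝕜} (hM : M.PosSemidef)
    (x y : Matrix n n 𝕜) :
    RCLike.re (y * M * xᴴ).trace ≤
      √(RCLike.re (x * M * xᴴ).trace) * √(RCLike.re (y * M * yᴴ).trace) := by
  let _ := M.toMatrixSeminormedAddCommGroup hM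
  let _ := M.toMatrixInnerProductSpace hM
  have h := re_inner_le_norm (𝕜 := 𝕜) x y
  rwa [norm_eq_sqrt_re_inner (𝕜 := 𝕜), norm_eq_sqrt_re_inner (𝕜 := 𝕜) y] at h

theorem IsHermitian.re_trace_le_sqrt_mul_sqrt [DecidableEq n] {H ρ : Matrix n n 𝕜}
    (hH : H.IsHermitian) (hρ : ρ.PosDef) :
    RCLike.re H.trace ≤ √(RCLike.re ρ.trace) * √(RCLike.re (H * H * ρ⁻¹).trace) := by
  have hdet : IsUnit ρ.det := (isUnit_iff_isUnit_det ρ).mp hρ.isUnit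
  have key := hρ.inv.posSemidef.re_trace_mul_mul_conjTranspose_le ρ H
  rwa [hρ.isHermitian.eq, hH.eq, mul_nonsing_inv ρ hdet, one_mul,
    nonsing_inv_mul_cancel_right ρ H hdet, trace_mul_cycle] at key

end Matrix

namespace QD

open Matrix

theorem traceNorm_eq_re_trace_abs {n : Type*} [Fintype n] [DecidableEq n] (X : Matrix n n ℂ) :
    traceNorm X = (CFC.abs X).trace.re := by
  have hXX := posSemidef_conjTranspose_mul_self X
  have hsqrt : (fun x : ℝ => (NNReal.sqrt x.toNNReal : ℝ)) = Real.sqrt :=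
    funext fun x => (Real.sqrt.eq_1 x).symm
  rw [CFC.abs, CFC.sqrt_eq_cfc, star_eq_conjTranspose, cfc_nnreal_eq_real _ _ hXX.nonneg,
    hXX.1.cfc_eq, IsHermitian.cfc, Unitary.conjStarAlgAut_apply, hsqrt]
  rfl

/-- **Cauchy–Schwarz type inequality for the trace norm** (Lemma 1 in the paper). -/
theorem traceNorm_le_sqrt_trace_inv
    (d : ℕ) (X ρ : Matrix (Fin d) (Fin d) ℂ) (hρ : ρ.PosDef) (hρ1 : ρ.trace = 1) :
    traceNorm X ≤ Real.sqrt ((Xᴴ * X * ρ⁻¹).trace.re) := by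
  have hAbs : (CFC.abs X).IsHermitian := (CFC.abs_nonneg X).posSemidef.isHermitian
  rw [traceNorm_eq_re_trace_abs]
  simpa only [CFC.abs_mul_abs, star_eq_conjTranspose, RCLike.re_to_complex, hρ1, Complex.one_re,
    Real.sqrt_one, one_mul] using hAbs.re_trace_le_sqrt_mul_sqrt hρ

end QD
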